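/- Let g be an invertible bounded operator on H such that [g,P₊] is Hilbert–Schmidt, and let μ ∈ L¹_res. Then gμg⁻¹ ∈ L¹_res and Tr_res(gμg⁻¹) = Tr_res(μ). -/

import Mathlib

noncomputable section

variable {H : Type*} [NormedAddCommGroup H] [InnerProductSpace ℂ H] [CompleteSpace H]

/-- Hilbert–Schmidt operator (with respect to the Hilbert basis `b`). -/
def IsHS {ι : Type*} (b : HilbertBasis ι ℂ H) (T : H →L[ℂ] H) : Prop :=
  Summable fun i => ‖T (b i)‖ ^ 2

/-- Trace-class operator: a product of two Hilbert–Schmidt operators. -/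
def IsTC {ι : Type*} (b : HilbertBasis ι ℂ H) (T : H →L[ℂ] H) : Prop :=
  ∃ A B : H →L[ℂ] H, IsHS b A ∧ IsHS b B ∧ T = A * B

/-- The trace with respect to the Hilbert basis `b`. -/
def trB {ι : Type*} (b : HilbertBasis ι ℂ H) (T : H →L[ℂ] H) : ℂ :=
  ∑' i, (inner ℂ (b i) (T (b i)) : ℂ)

/-- Membership in the restricted algebra `gl_res`: the commutator `[T, P]` is
Hilbert–Schmidt. -/
def InGlres {ι : Type*} (b : HilbertBasis ι ℂ H) (P T : H →L[ℂ] H) : Prop :=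
  IsHS b (T * P - P * T)

/-- Membership in `L¹_res`: the diagonal blocks `T₊₊ = P T P`, `T₋₋ = (1-P) T (1-P)`
are trace class and the off-diagonal blocks `T₊₋ = P T (1-P)`, `T₋₊ = (1-P) T P`
are Hilbert–Schmidt. -/
def InL1res {ι : Type*} (b : HilbertBasis ι ℂ H) (P T : H →L[ℂ] H) : Prop :=
  IsTC b (P * T * P) ∧ IsTC b ((1 - P) * T * (1 - P)) ∧
    IsHS b (P * T * (1 - P)) ∧ IsHS b ((1 - P) * T * P)

/-- The restricted trace `Tr_res T = Tr T₊₊ + Tr T₋₋`. -/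
def trRes {ι : Type*} (b : HilbertBasis ι ℂ H) (P T : H →L[ℂ] H) : ℂ :=
  trB b (P * T * P) + trB b ((1 - P) * T * (1 - P))

/-!
Write `Q = 1 - P` and let `u` be bounded with `[u, P]` Hilbert–Schmidt, so that its off-diagonal
blocks `PuQ`, `QuP` are Hilbert–Schmidt. In `P(uμ)P = (PuP)(PμP) + (PuQ)(QμP)` the first term is
trace class because `PμP` is, the second as a product of two Hilbert–Schmidt operators; so `L¹_res`
is stable under multiplication by `u` on either side. Cyclicity of the trace on these terms gives
`Tr_res(uμ) = Tr_res(μu)`: the diagonal terms agree block by block, and the cross term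
`Tr(PuQ·QμP)` of the `P`-block of `uμ` is the cross term `Tr(QμP·PuQ)` of the `Q`-block of `μu`.
Both `g` and `g⁻¹` are such `u`, and `Tr_res(gμg⁻¹) = Tr_res(g⁻¹gμ) = Tr_res μ`.
-/

set_option linter.unusedSectionVars false

open ContinuousLinearMap
open scoped InnerProductSpace

section

variable {ι : Type*} {b : HilbertBasis ι ℂ H} {A B S T : H →L[ℂ] H}

lemma HilbertBasis.hasSum_norm_inner_sq (b : HilbertBasis ι ℂ H) (x : H) :
    HasSum (fun i => ‖⟪b i, x⟫_ℂ‖ ^ 2) (‖x‖ ^ 2) := by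
  simpa [b.repr_apply_apply] using lp.hasSum_norm (p := 2) (by norm_num) (b.repr x)

lemma isHS_iff_summable_norm_inner_sq :
    IsHS b T ↔ Summable fun p : ι × ι => ‖⟪b p.2, T (b p.1)⟫_ℂ‖ ^ 2 := by
  rw [summable_prod_of_nonneg fun _ => by positivity]
  simp only [fun i => (b.hasSum_norm_inner_sq (T (b i))).tsum_eq]
  exact ⟨fun h => ⟨fun i => (b.hasSum_norm_inner_sq _).summable, h⟩, And.right⟩

lemma IsHS.star (hT : IsHS b T) : IsHS b (star T) := by
  rw [isHS_iff_summable_norm_inner_sq] at hT ⊢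
  refine ((Equiv.prodComm ι ι).summable_iff.mpr hT).congr fun p => ?_
  simp [star_eq_adjoint, adjoint_inner_right, norm_inner_symm]

lemma IsHS.mul_left (hT : IsHS b T) (A : H →L[ℂ] H) : IsHS b (A * T) := by
  refine (Summable.mul_left (‖A‖ ^ 2) hT).of_nonneg_of_le (fun _ => by positivity) fun i => ?_
  rw [← mul_pow]
  exact pow_le_pow_left₀ (norm_nonneg _) (A.le_opNorm _) 2

lemma IsHS.mul_right (hT : IsHS b T) (A : H →L[ℂ] H) : IsHS b (T * A) := by
  simpa using (hT.star.mul_left (Star.star A)).star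

lemma IsHS.add (hS : IsHS b S) (hT : IsHS b T) : IsHS b (S + T) := by
  refine ((Summable.add hS hT).mul_left 2).of_nonneg_of_le (fun _ => by positivity) fun i => ?_
  rw [add_apply]
  nlinarith [norm_add_le (S (b i)) (T (b i)), norm_nonneg (S (b i) + T (b i)),
    sq_nonneg (‖S (b i)‖ - ‖T (b i)‖)]

lemma IsHS.neg (hT : IsHS b T) : IsHS b (-T) := by
  simpa [IsHS] using hT

lemma IsTC.isHS (hT : IsTC b T) : IsHS b T := by
  obtain ⟨A, B, -, hB, rfl⟩ := hT
  exact hB.mul_left A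

lemma IsTC.mul_left (hT : IsTC b T) (A : H →L[ℂ] H) : IsTC b (A * T) := by
  obtain ⟨X, Y, hX, hY, rfl⟩ := hT
  exact ⟨A * X, Y, hX.mul_left A, hY, (mul_assoc _ _ _).symm⟩

lemma IsTC.mul_right (hT : IsTC b T) (A : H →L[ℂ] H) : IsTC b (T * A) := by
  obtain ⟨X, Y, hX, hY, rfl⟩ := hT
  exact ⟨X, Y * A, hX, hY.mul_right A, mul_assoc _ _ _⟩

lemma summable_inner_mul (hA : IsHS b A) (hB : IsHS b B) :
    Summable fun i => ⟪b i, (A * B) (b i)⟫_ℂ := by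
  refine ((Summable.add hA.star hB).mul_left (1 / 2 : ℝ)).of_norm_bounded fun i => ?_
  change ‖⟪b i, A (B (b i))⟫_ℂ‖ ≤ _
  rw [← adjoint_inner_left, ← star_eq_adjoint]
  have := norm_inner_le_norm (𝕜 := ℂ) (star A (b i)) (B (b i))
  nlinarith [sq_nonneg (‖star A (b i)‖ - ‖B (b i)‖)]

lemma IsTC.summable_inner (hT : IsTC b T) : Summable fun i => ⟪b i, T (b i)⟫_ℂ := by
  obtain ⟨A, B, hA, hB, rfl⟩ := hT
  exact summable_inner_mul hA hB

lemma trB_add (hS : IsTC b S) (hT : IsTC b T) : trB b (S + T) = trB b S + trB b T := by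
  simp only [trB, add_apply, inner_add_right]
  exact hS.summable_inner.tsum_add hT.summable_inner

lemma hasSum_inner_mul_inner_basis (A B : H →L[ℂ] H) (i : ι) :
    HasSum (fun j => ⟪b i, A (b j)⟫_ℂ * ⟪b j, B (b i)⟫_ℂ) ⟪b i, (A * B) (b i)⟫_ℂ := by
  simpa [← adjoint_inner_left A] using b.hasSum_inner_mul_inner (adjoint A (b i)) (B (b i))

lemma summable_inner_mul_inner_basis (hA : IsHS b A) (hB : IsHS b B) :
    Summable fun p : ι × ι => ⟪b p.1, A (b p.2)⟫_ℂ * ⟪b p.2, B (b p.1)⟫_ℂ := by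
  have hA' := isHS_iff_summable_norm_inner_sq.mp hA.star
  have hB' := isHS_iff_summable_norm_inner_sq.mp hB
  refine ((hA'.add hB').mul_left (1 / 2 : ℝ)).of_norm_bounded fun p => ?_
  have h : ‖⟪b p.1, A (b p.2)⟫_ℂ‖ = ‖⟪b p.2, star A (b p.1)⟫_ℂ‖ := by
    rw [star_eq_adjoint, adjoint_inner_right, norm_inner_symm]
  rw [norm_mul, h]
  linarith [two_mul_le_add_sq ‖⟪b p.2, star A (b p.1)⟫_ℂ‖ ‖⟪b p.2, B (b p.1)⟫_ℂ‖]

lemma trB_mul_eq_tsum (hA : IsHS b A) (hB : IsHS b B) :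
    trB b (A * B) = ∑' p : ι × ι, ⟪b p.1, A (b p.2)⟫_ℂ * ⟪b p.2, B (b p.1)⟫_ℂ := by
  rw [trB, (summable_inner_mul_inner_basis hA hB).tsum_prod]
  exact tsum_congr fun i => (hasSum_inner_mul_inner_basis A B i).tsum_eq.symm

lemma trB_mul_comm (hA : IsHS b A) (hB : IsHS b B) : trB b (A * B) = trB b (B * A) := by
  rw [trB_mul_eq_tsum hA hB, trB_mul_eq_tsum hB hA, ← (Equiv.prodComm ι ι).tsum_eq]
  exact tsum_congr fun p => mul_comm _ _

lemma IsTC.trB_mul_comm (hT : IsTC b T) (A : H →L[ℂ] H) : trB b (T * A) = trB b (A * T) := by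
  obtain ⟨X, Y, hX, hY, rfl⟩ := hT
  calc trB b (X * Y * A) = trB b (Y * A * X) := by
        rw [mul_assoc, _root_.trB_mul_comm hX (hY.mul_right A)]
    _ = trB b (A * (X * Y)) := by
        rw [mul_assoc, _root_.trB_mul_comm hY (hX.mul_left A), mul_assoc]

namespace HilbertBasis

variable (b) {k k' : ι → ι}

/-- The isometry `b i ↦ b (k i)`. -/
def isometryOfInjective (hk : k.Injective) : H →L[ℂ] H :=
  ((b.orthonormal.comp k hk).orthogonalFamily.linearIsometry.comp
    b.repr.toLinearIsometry).toContinuousLinearMap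

lemma star_isometryOfInjective_mul_self (hk : k.Injective) :
    star (b.isometryOfInjective hk) * b.isometryOfInjective hk = 1 := by
  rw [star_eq_adjoint]
  exact LinearIsometry.adjoint_comp_self _

lemma inner_isometryOfInjective_eq_zero (hk : k.Injective) {w : H}
    (hw : ∀ i, ⟪w, b (k i)⟫_ℂ = 0) (x : H) : ⟪w, b.isometryOfInjective hk x⟫_ℂ = 0 := by
  have h := ((b.orthonormal.comp k hk).orthogonalFamily.hasSum_linearIsometry
    (b.repr x)).mapL (innerSL ℂ w)
  simp only [innerSL_apply_apply, LinearIsometry.toSpanSingleton_apply, inner_smul_right,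
    Function.comp_apply, hw, mul_zero] at h
  exact h.unique hasSum_zero

lemma star_isometryOfInjective_mul_eq_zero (hk : k.Injective) (hk' : k'.Injective)
    (hkk' : ∀ i j, k i ≠ k' j) :
    star (b.isometryOfInjective hk) * b.isometryOfInjective hk' = 0 := by
  ext x
  refine ext_inner_left ℂ fun y => ?_
  rw [star_eq_adjoint, mul_apply_eq_comp, adjoint_inner_right, zero_apply, inner_zero_right]
  refine b.inner_isometryOfInjective_eq_zero hk' (fun j => ?_) x
  rw [← inner_conj_symm, b.inner_isometryOfInjective_eq_zero hk
    (fun i => b.orthonormal.inner_eq_zero (hkk' i j).symm) y, map_zero]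

end HilbertBasis

/-- In infinite dimension, two isometries `J₁`, `J₂` with orthogonal ranges turn `A₁B₁ + A₂B₂`
into the single product `(A₁J₁* + A₂J₂*)(J₁B₁ + J₂B₂)`. -/
lemma IsTC.add (hS : IsTC b S) (hT : IsTC b T) : IsTC b (S + T) := by
  cases finite_or_infinite ι
  · exact ⟨S + T, 1, .of_finite, .of_finite, (mul_one _).symm⟩
  obtain ⟨A₁, B₁, hA₁, hB₁, rfl⟩ := hS
  obtain ⟨A₂, B₂, hA₂, hB₂, rfl⟩ := hT
  obtain ⟨e⟩ : Nonempty (ι ⊕ ι ≃ ι) := by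
    rw [← Cardinal.eq, Cardinal.mk_sum, Cardinal.lift_id,
      Cardinal.add_eq_self (Cardinal.aleph0_le_mk ι)]
  have hinl : (e ∘ Sum.inl).Injective := e.injective.comp Sum.inl_injective
  have hinr : (e ∘ Sum.inr).Injective := e.injective.comp Sum.inr_injective
  set J₁ := b.isometryOfInjective hinl
  set J₂ := b.isometryOfInjective hinr
  refine ⟨A₁ * star J₁ + A₂ * star J₂, J₁ * B₁ + J₂ * B₂,
    (hA₁.mul_right _).add (hA₂.mul_right _), (hB₁.mul_left _).add (hB₂.mul_left _), ?_⟩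
  have h₁₂ := b.star_isometryOfInjective_mul_eq_zero hinl hinr fun i j h => by
    simpa using e.injective h
  have h₂₁ := b.star_isometryOfInjective_mul_eq_zero hinr hinl fun i j h => by
    simpa using e.injective h
  calc A₁ * B₁ + A₂ * B₂
      = A₁ * (star J₁ * J₁) * B₁ + A₁ * (star J₁ * J₂) * B₂ +
          A₂ * (star J₂ * J₁) * B₁ + A₂ * (star J₂ * J₂) * B₂ := by
        rw [b.star_isometryOfInjective_mul_self, b.star_isometryOfInjective_mul_self, h₁₂, h₂₁]
        noncomm_ring
    _ = _ := by noncomm_ring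

lemma IsIdempotentElem.compress_mul {R : Type*} [Ring R] {p : R} (hp : IsIdempotentElem p)
    (x y : R) :
    p * (x * y) * p = p * x * p * (p * y * p) + p * x * (1 - p) * ((1 - p) * y * p) := by
  calc p * (x * y) * p = p * x * (p + (1 - p)) * y * p := by noncomm_ring
    _ = p * x * (p * p) * y * p + p * x * ((1 - p) * (1 - p)) * y * p := by
        rw [hp.eq, hp.one_sub.eq]; noncomm_ring
    _ = _ := by noncomm_ring

variable {P u μ : H →L[ℂ] H}

lemma InGlres.isHS_offDiag (hP : IsIdempotentElem P) (hu : InGlres b P u) :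
    IsHS b (P * u * (1 - P)) ∧ IsHS b ((1 - P) * u * P) := by
  have h₁ : P * u * (1 - P) = -(P * (u * P - P * u)) :=
    calc P * u * (1 - P) = (P * P) * u - P * u * P := by rw [hP.eq]; noncomm_ring
      _ = _ := by noncomm_ring
  have h₂ : (1 - P) * u * P = (u * P - P * u) * P :=
    calc (1 - P) * u * P = u * (P * P) - P * u * P := by rw [hP.eq]; noncomm_ring
      _ = _ := by noncomm_ring
  rw [h₁, h₂]
  exact ⟨(hu.mul_left P).neg, hu.mul_right P⟩

lemma InGlres.one_sub (hu : InGlres b P u) : InGlres b (1 - P) u := by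
  have h : u * (1 - P) - (1 - P) * u = -(u * P - P * u) := by noncomm_ring
  rw [InGlres, h]
  exact IsHS.neg hu

lemma InGlres.units_inv (g : (H →L[ℂ] H)ˣ) (hg : InGlres b P g) : InGlres b P ↑g⁻¹ := by
  have h : (↑g⁻¹ * P - P * ↑g⁻¹ : H →L[ℂ] H) = -(↑g⁻¹ * (g * P - P * g) * ↑g⁻¹) := by
    calc (↑g⁻¹ * P - P * ↑g⁻¹ : H →L[ℂ] H)
        = ↑g⁻¹ * P * (g * ↑g⁻¹) - (↑g⁻¹ * g) * P * ↑g⁻¹ := by simp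
      _ = _ := by noncomm_ring
  rw [InGlres, h]
  exact ((IsHS.mul_left hg _).mul_right _).neg

lemma InL1res.isHS (hμ : InL1res b P μ) : IsHS b μ := by
  obtain ⟨h₁, h₂, h₃, h₄⟩ := hμ
  have h : μ = P * μ * P + P * μ * (1 - P) + (1 - P) * μ * P + (1 - P) * μ * (1 - P) := by
    noncomm_ring
  rw [h]
  exact ((h₁.isHS.add h₃).add h₄).add h₂.isHS

lemma InL1res.one_sub (hμ : InL1res b P μ) : InL1res b (1 - P) μ := by
  obtain ⟨h₁, h₂, h₃, h₄⟩ := hμ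
  rw [InL1res, sub_sub_cancel]
  exact ⟨h₂, h₁, h₄, h₃⟩

lemma inL1res_of_isHS (hμ : IsHS b μ) (h₁ : IsTC b (P * μ * P))
    (h₂ : IsTC b ((1 - P) * μ * (1 - P))) : InL1res b P μ :=
  ⟨h₁, h₂, (hμ.mul_left P).mul_right _, (hμ.mul_left _).mul_right P⟩

lemma isTC_compress_mul_left (hP : IsIdempotentElem P) (hu : InGlres b P u)
    (hμ : InL1res b P μ) : IsTC b (P * (u * μ) * P) := by
  rw [hP.compress_mul]
  exact (hμ.1.mul_left _).add ⟨_, _, (hu.isHS_offDiag hP).1, hμ.2.2.2, rfl⟩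

lemma isTC_compress_mul_right (hP : IsIdempotentElem P) (hu : InGlres b P u)
    (hμ : InL1res b P μ) : IsTC b (P * (μ * u) * P) := by
  rw [hP.compress_mul]
  exact (hμ.1.mul_right _).add ⟨_, _, hμ.2.2.1, (hu.isHS_offDiag hP).2, rfl⟩

lemma InL1res.mul_left (hP : IsIdempotentElem P) (hu : InGlres b P u) (hμ : InL1res b P μ) :
    InL1res b P (u * μ) :=
  inL1res_of_isHS (hμ.isHS.mul_left u) (isTC_compress_mul_left hP hu hμ)
    (isTC_compress_mul_left hP.one_sub hu.one_sub hμ.one_sub)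

lemma InL1res.mul_right (hP : IsIdempotentElem P) (hu : InGlres b P u) (hμ : InL1res b P μ) :
    InL1res b P (μ * u) :=
  inL1res_of_isHS (hμ.isHS.mul_right u) (isTC_compress_mul_right hP hu hμ)
    (isTC_compress_mul_right hP.one_sub hu.one_sub hμ.one_sub)

lemma trB_compress_mul_sub (hP : IsIdempotentElem P) (hu : InGlres b P u)
    (hμ : InL1res b P μ) :
    trB b (P * (u * μ) * P) - trB b (P * (μ * u) * P) =
      trB b ((1 - P) * μ * P * (P * u * (1 - P))) -
        trB b (P * μ * (1 - P) * ((1 - P) * u * P)) := by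
  obtain ⟨hPμP, -, hPμQ, hQμP⟩ := hμ
  obtain ⟨hPuQ, hQuP⟩ := hu.isHS_offDiag hP
  rw [hP.compress_mul, hP.compress_mul, trB_add (hPμP.mul_left _) ⟨_, _, hPuQ, hQμP, rfl⟩,
    trB_add (hPμP.mul_right _) ⟨_, _, hPμQ, hQuP, rfl⟩, hPμP.trB_mul_comm,
    trB_mul_comm hPuQ hQμP]
  ring

lemma trRes_mul_comm (hP : IsIdempotentElem P) (hu : InGlres b P u) (hμ : InL1res b P μ) :
    trRes b P (u * μ) = trRes b P (μ * u) := by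
  have h₁ := trB_compress_mul_sub hP hu hμ
  have h₂ := trB_compress_mul_sub hP.one_sub hu.one_sub hμ.one_sub
  rw [sub_sub_cancel] at h₂
  rw [trRes, trRes]
  linear_combination h₁ + h₂

end

theorem stmt2_general
    (P : H →L[ℂ] H) (hPidem : IsIdempotentElem P)
    {ι : Type*} (b : HilbertBasis ι ℂ H) (g : (H →L[ℂ] H)ˣ)
    (hg : IsHS b ((g : H →L[ℂ] H) * P - P * (g : H →L[ℂ] H)))
    (μ : H →L[ℂ] H) (hμ : InL1res b P μ) :
    InL1res b P ((g : H →L[ℂ] H) * μ * ((g⁻¹ : (H →L[ℂ] H)ˣ) : H →L[ℂ] H)) ∧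
      trRes b P ((g : H →L[ℂ] H) * μ * ((g⁻¹ : (H →L[ℂ] H)ˣ) : H →L[ℂ] H)) =
        trRes b P μ := by
  have hg' : InGlres b P ↑g⁻¹ := InGlres.units_inv g hg
  have hgμ : InL1res b P (g * μ) := hμ.mul_left hPidem hg
  refine ⟨hgμ.mul_right hPidem hg', ?_⟩
  rw [← trRes_mul_comm hPidem hg' hgμ, ← mul_assoc, Units.inv_mul, one_mul]

/-- If `g` is an invertible bounded operator with `[g, P₊]`
Hilbert–Schmidt and `μ ∈ L¹_res`, then `gμg⁻¹ ∈ L¹_res` and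
`Tr_res(gμg⁻¹) = Tr_res μ`. -/
theorem stmt2 [TopologicalSpace.SeparableSpace H]
    (P : H →L[ℂ] H) (hPsa : IsSelfAdjoint P) (hPidem : IsIdempotentElem P)
    {ι : Type*} (b : HilbertBasis ι ℂ H) (g : (H →L[ℂ] H)ˣ)
    (hg : IsHS b ((g : H →L[ℂ] H) * P - P * (g : H →L[ℂ] H)))
    (μ : H →L[ℂ] H) (hμ : InL1res b P μ) :
    InL1res b P ((g : H →L[ℂ] H) * μ * ((g⁻¹ : (H →L[ℂ] H)ˣ) : H →L[ℂ] H)) ∧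
      trRes b P ((g : H →L[ℂ] H) * μ * ((g⁻¹ : (H →L[ℂ] H)ˣ) : H →L[ℂ] H)) =
        trRes b P μ :=
  stmt2_general P hPidem b g hg μ hμ
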